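/- Let φ : ℝ → ℝ be monotonically increasing and applied componentwise. If u⁻ ≤ u ≤ u⁺ componentwise, then φ(W^- u⁺ + W^+ u⁻ + b) ≤ φ(W u + b) ≤ φ(W^- u⁻ + W^+ u⁺ + b) componentwise, where W^- and W^+ are the negative- and nonnegative-part matrices of W. -/

import Mathlib

open Matrix

/-! Splitting `W = W⁻ + W⁺` into its nonpositive and nonnegative parts, `x ↦ W⁺ x` is
monotone and `x ↦ W⁻ x` antitone, so over the box `u⁻ ≤ u ≤ u⁺` the affine map `u ↦ W u + b`
is smallest at `W⁻ u⁺ + W⁺ u⁻ + b` and largest at `W⁻ u⁻ + W⁺ u⁺ + b`; the monotone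
activation preserves both bounds componentwise. -/

namespace Matrix

section OrderedRing

variable {m n R : Type*} [Fintype n] [Ring R] [PartialOrder R] [IsOrderedRing R]
  {A Aneg Apos : Matrix m n R} {x y : n → R}

theorem mulVec_le_mulVec_of_nonneg (hA : ∀ i j, 0 ≤ A i j) (hxy : x ≤ y) :
    A *ᵥ x ≤ A *ᵥ y :=
  fun i => dotProduct_le_dotProduct_of_nonneg_left hxy (hA i)

theorem mulVec_le_mulVec_of_nonpos (hA : ∀ i j, A i j ≤ 0) (hxy : x ≤ y) :
    A *ᵥ y ≤ A *ᵥ x := by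
  have hneg : (-A) *ᵥ x ≤ (-A) *ᵥ y :=
    mulVec_le_mulVec_of_nonneg (fun i j => neg_nonneg.mpr (hA i j)) hxy
  simpa only [neg_mulVec, neg_le_neg_iff] using hneg

theorem mulVec_bounds_of_sign_split (hA : A = Aneg + Apos)
    (hneg : ∀ i j, Aneg i j ≤ 0) (hpos : ∀ i j, 0 ≤ Apos i j)
    {lo x hi : n → R} (hlo : lo ≤ x) (hhi : x ≤ hi) :
    Aneg *ᵥ hi + Apos *ᵥ lo ≤ A *ᵥ x ∧ A *ᵥ x ≤ Aneg *ᵥ lo + Apos *ᵥ hi := by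
  rw [hA, add_mulVec]
  exact ⟨add_le_add (mulVec_le_mulVec_of_nonpos hneg hhi) (mulVec_le_mulVec_of_nonneg hpos hlo),
    add_le_add (mulVec_le_mulVec_of_nonpos hneg hlo) (mulVec_le_mulVec_of_nonneg hpos hhi)⟩

end OrderedRing

theorem eq_min_zero_add_max_zero {m n R : Type*} [AddCommMonoid R] [LinearOrder R]
    [IsOrderedAddMonoid R] {A Aneg Apos : Matrix m n R}
    (hneg : ∀ i j, Aneg i j = min (A i j) 0) (hpos : ∀ i j, Apos i j = max (A i j) 0) :
    A = Aneg + Apos := by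
  ext i j
  rw [add_apply, hneg, hpos, min_add_max, add_zero]

end Matrix

/-- interval bounds for a single affine layer followed by a
monotone activation. -/
theorem monotone_activation_interval_bounds
    (m n : ℕ) (φ : ℝ → ℝ) (hφ : Monotone φ)
    (W : Matrix (Fin m) (Fin n) ℝ) (b : Fin m → ℝ)
    (Wneg Wpos : Matrix (Fin m) (Fin n) ℝ)
    (hneg : ∀ i j, Wneg i j = min (W i j) 0)
    (hpos : ∀ i j, Wpos i j = max (W i j) 0)
    (ulo u uhi : Fin n → ℝ) (hlo : ulo ≤ u) (hhi : u ≤ uhi) :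
    (fun i => φ ((Wneg *ᵥ uhi + Wpos *ᵥ ulo + b) i))
      ≤ (fun i => φ ((W *ᵥ u + b) i)) ∧
    (fun i => φ ((W *ᵥ u + b) i))
      ≤ (fun i => φ ((Wneg *ᵥ ulo + Wpos *ᵥ uhi + b) i)) := by
  obtain ⟨hlower, hupper⟩ := mulVec_bounds_of_sign_split (eq_min_zero_add_max_zero hneg hpos)
    (fun i j => (hneg i j).trans_le (min_le_right _ _))
    (fun i j => (le_max_right _ _).trans_eq (hpos i j).symm) hlo hhi
  exact ⟨fun i => hφ (add_le_add_left hlower b i), fun i => hφ (add_le_add_left hupper b i)⟩
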